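/- arXiv:2208.13684 — 3 statements merged into one kernel-verified Lean document; each statement's English description precedes it below -/
import Mathlib

section
/- The ball-valuation map is strictly order-reversing with respect to inclusion: for closed balls B = B(a,γ) and C = B(b,ε) with radii in Γ, if B ⊋ C then ω_B < ω_C, i.e., ω_B(f) ≤ ω_C(f) for all f ∈ K[x] and there exists f with strict inequality. -/
/-- The monomial valuation `ω_{a,γ}` of a closed ball `B(a,γ)`. -/
noncomputable def omegaBall {K : Type*} [Field K] {Γ : Type*} [AddCommGroup Γ] [LinearOrder Γ] [IsOrderedAddMonoid Γ]
    (v : K → WithTop Γ) (a : K) (γ : Γ) (f : Polynomial K) : WithTop Γ :=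
  (Finset.range (f.natDegree + 1)).inf fun n =>
    v ((f.comp (Polynomial.X + Polynomial.C a)).coeff n) + (↑(n • γ) : WithTop Γ)

/-!
Since `b ∈ B(a,γ)`, re-expanding the Taylor expansion of `f` at `a` around `b` only adds terms
`(b - a)^m` with `v (b - a) ≥ γ`, so moving the centre within the ball does not decrease `ω`;
enlarging the radius does not decrease it either, whence `ω_{a,γ} ≤ ω_{b,γ} ≤ ω_{b,ε}`. Strict
inclusion forces `γ < ε`, and `x - b` separates the two: `ω_{a,γ}(x - b) ≤ γ < ε = ω_{b,ε}(x - b)`.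
-/

open Polynomial

namespace AddValuation

variable {R Γ₀ : Type*} [Ring R] [LinearOrderedAddCommMonoidWithTop Γ₀] (w : AddValuation R Γ₀)

theorem map_natCast_nonneg (n : ℕ) : 0 ≤ w n := by
  induction n with
  | zero => simp
  | succ n ih => exact Nat.cast_succ (R := R) n ▸ w.map_le_add ih w.map_one.ge

theorem le_map_sum_add {ι : Type*} {s : Finset ι} {f : ι → R} {δ e : Γ₀}
    (hf : ∀ i ∈ s, δ ≤ w (f i) + e) : δ ≤ w (∑ i ∈ s, f i) + e := by
  refine Finset.sum_induction f (fun x => δ ≤ w x + e) (fun x y hx hy => ?_) (by simp) hf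
  calc δ ≤ min (w x) (w y) + e := (le_min hx hy).trans_eq (min_add_add_right _ _ _)
    _ ≤ w (x + y) + e := add_le_add_left (w.map_add x y) e

theorem le_map_eval_add {p : R[X]} {c : R} {γ δ e : Γ₀} (hc : γ ≤ w c)
    (hp : ∀ m, δ ≤ w (p.coeff m) + m • γ + e) : δ ≤ w (p.eval c) + e := by
  rw [eval_eq_sum_range]
  refine w.le_map_sum_add fun m _ => (hp m).trans (add_le_add_left ?_ e)
  rw [w.map_mul, w.map_pow]
  exact add_le_add_right (nsmul_le_nsmul_right hc m) _

theorem setOf_le_map_sub_subset {a b : R} {γ ε : Γ₀} (hε : ε ≤ γ) (hab : γ ≤ w (a - b)) :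
    {c | γ ≤ w (c - a)} ⊆ {c | ε ≤ w (c - b)} := fun c hc =>
  hε.trans <| (w.map_le_add hc hab).trans_eq <| by rw [sub_add_sub_cancel]

end AddValuation

section omegaBall

variable {K Γ : Type*} [Field K] [AddCommGroup Γ] [LinearOrder Γ] [IsOrderedAddMonoid Γ]
  (w : AddValuation K (WithTop Γ)) (a b : K) {γ ε : Γ} (f : K[X])

theorem omegaBall_le_coeff_taylor (n : ℕ) :
    omegaBall w a γ f ≤ w ((taylor a f).coeff n) + ↑(n • γ) := by
  by_cases hn : n ≤ f.natDegree
  · rw [taylor_apply]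
    exact Finset.inf_le (Finset.mem_range_succ_iff.mpr hn)
  · rw [coeff_eq_zero_of_natDegree_lt (by rwa [natDegree_taylor, ← not_le]), w.map_zero,
      WithTop.top_add]
    exact le_top

theorem le_omegaBall_iff {δ : WithTop Γ} :
    δ ≤ omegaBall w a γ f ↔ ∀ n, δ ≤ w ((taylor a f).coeff n) + ↑(n • γ) := by
  refine ⟨fun h n => h.trans (omegaBall_le_coeff_taylor w a f n), fun h => ?_⟩
  exact Finset.le_inf fun n _ => taylor_apply (r := a) (f := f) ▸ h n

variable {f} in
theorem omegaBall_mono (h : γ ≤ ε) : omegaBall w a γ f ≤ omegaBall w a ε f := by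
  refine (le_omegaBall_iff w a f).mpr fun n => (omegaBall_le_coeff_taylor w a f n).trans ?_
  gcongr
  exact WithTop.coe_le_coe.mpr (nsmul_le_nsmul_right h n)

theorem omegaBall_le_omegaBall_of_le_map_sub (h : (γ : WithTop Γ) ≤ w (b - a)) :
    omegaBall w a γ f ≤ omegaBall w b γ f := by
  refine (le_omegaBall_iff w b f).mpr fun n => ?_
  rw [← sub_add_cancel b a, ← taylor_taylor, taylor_coeff]
  refine w.le_map_eval_add h fun m => ?_
  calc omegaBall w a γ f ≤ w ((taylor a f).coeff (m + n)) + ↑((m + n) • γ) :=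
        omegaBall_le_coeff_taylor w a f (m + n)
    _ ≤ w ((m + n).choose n) + w ((taylor a f).coeff (m + n)) + m • ↑γ + ↑(n • γ) := by
        rw [add_nsmul, WithTop.coe_add, WithTop.coe_nsmul, ← add_assoc]
        gcongr
        exact le_add_of_nonneg_left (w.map_natCast_nonneg _)
    _ = w ((hasseDeriv n (taylor a f)).coeff m) + m • ↑γ + ↑(n • γ) := by
        rw [hasseDeriv_coeff, w.map_mul]

theorem omegaBall_X_sub_C_le : omegaBall w a γ (X - C b) ≤ γ := by
  refine (omegaBall_le_coeff_taylor w a _ 1).trans_eq ?_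
  simp [taylor_X, taylor_C]

theorem omegaBall_X_sub_C_self : omegaBall w b γ (X - C b) = γ := by
  refine le_antisymm (omegaBall_X_sub_C_le w b b) ((le_omegaBall_iff w b _).mpr fun n => ?_)
  rw [map_sub, taylor_X, taylor_C, add_sub_cancel_right, coeff_X]
  split_ifs with h
  · simp [← h]
  · simp

end omegaBall

theorem stmt_15_general {K : Type*} [Field K] {Γ : Type*}
    [AddCommGroup Γ] [LinearOrder Γ] [IsOrderedAddMonoid Γ]
    (v : K → WithTop Γ)
    (hv0 : v 0 = ⊤) (hv1 : v 1 = 0)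
    (hmul : ∀ x y : K, v (x * y) = v x + v y)
    (hadd : ∀ x y : K, min (v x) (v y) ≤ v (x + y))
    (a b : K) (γ ε : Γ)
    (hss : {c : K | (ε : WithTop Γ) ≤ v (c - b)} ⊂ {c : K | (γ : WithTop Γ) ≤ v (c - a)}) :
    (∀ f : Polynomial K, omegaBall v a γ f ≤ omegaBall v b ε f) ∧
    (∃ f : Polynomial K, omegaBall v a γ f < omegaBall v b ε f) := by
  let w := AddValuation.of v hv0 hv1 hadd hmul
  have hb : (γ : WithTop Γ) ≤ w (b - a) := hss.1 (by simp [hv0])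
  have hγε : γ < ε := lt_of_not_ge fun h =>
    hss.2 (w.setOf_le_map_sub_subset (WithTop.coe_le_coe.mpr h) (w.map_sub_swap a b ▸ hb))
  refine ⟨fun f => (omegaBall_le_omegaBall_of_le_map_sub w a b f hb).trans
    (omegaBall_mono w b hγε.le), X - C b, ?_⟩
  calc omegaBall w a γ (X - C b) ≤ γ := omegaBall_X_sub_C_le w a b
    _ < ε := WithTop.coe_lt_coe.mpr hγε
    _ = omegaBall w b ε (X - C b) := (omegaBall_X_sub_C_self w b).symm

/-- The ball-valuation map is strictly order-reversing with respect to inclusion: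
for closed balls `B = B(a,γ) ⊋ C = B(b,ε)` one has `ω_B < ω_C`, i.e. `ω_B(f) ≤ ω_C(f)`
for all `f ∈ K[x]`, with strict inequality for some `f`. -/
theorem stmt_15 {K : Type*} [Field K] [IsAlgClosed K] {Γ : Type*}
    [AddCommGroup Γ] [LinearOrder Γ] [IsOrderedAddMonoid Γ]
    (v : K → WithTop Γ)
    (hv0 : v 0 = ⊤) (hv1 : v 1 = 0)
    (hmul : ∀ x y : K, v (x * y) = v x + v y)
    (hadd : ∀ x y : K, min (v x) (v y) ≤ v (x + y))
    (hsurj : ∀ γ : Γ, ∃ x : K, v x = (γ : WithTop Γ))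
    (a b : K) (γ ε : Γ)
    (hss : {c : K | (ε : WithTop Γ) ≤ v (c - b)} ⊂ {c : K | (γ : WithTop Γ) ≤ v (c - a)}) :
    (∀ f : Polynomial K, omegaBall v a γ f ≤ omegaBall v b ε f) ∧
    (∃ f : Polynomial K, omegaBall v a γ f < omegaBall v b ε f) :=
  stmt_15_general v hv0 hv1 hmul hadd a b γ ε hss
end

section
/- For a nest of closed balls (B_i)_{i∈I} (totally ordered index set I, B_i ⊋ B_j for i < j) with empty intersection in an algebraically closed valued field, every polynomial f ∈ K[x] is stable: there exists i_0 ∈ I such that ω_{B_i}(f) = ω_{B_{i_0}}(f) for all i ≥ i_0, where ω_{B_i} are the monomial valuations of the balls; equivalently, the set {ω_{B_i}(f) : i ∈ I} has a maximum. -/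
open Polynomial Filter Finset

namespace AddValuation

variable {R Γ₀ : Type*} [Ring R] [LinearOrderedAddCommMonoidWithTop Γ₀] (v : AddValuation R Γ₀)

theorem map_sum_eq_of_lt {ι : Type*} [DecidableEq ι] {s : Finset ι} {f : ι → R} {j : ι}
    (hj : j ∈ s) (hf : ∀ i ∈ s \ {j}, v (f j) < v (f i)) : v (∑ i ∈ s, f i) = v (f j) :=
  Valuation.map_sum_eq_of_lt v hj hf

end AddValuation

section GaussValuation

variable {K Γ : Type*} [Field K] [AddCommGroup Γ] [LinearOrder Γ] [IsOrderedAddMonoid Γ]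
  (v : AddValuation K (WithTop Γ)) (γ : Γ)

/-- `ω_{B(0,γ)}`. -/
noncomputable def gaussVal (F : K[X]) : WithTop Γ :=
  (Finset.range (F.natDegree + 1)).inf fun n => v (F.coeff n) + (n • γ : Γ)

theorem omegaBall_eq_gaussVal_taylor (a : K) (f : K[X]) :
    omegaBall v a γ f = gaussVal v γ (taylor a f) := by
  rw [omegaBall, gaussVal, natDegree_taylor, taylor_apply]

variable {v γ}

theorem gaussVal_zero : gaussVal v γ 0 = ⊤ := by
  simp [gaussVal]

theorem gaussVal_le (F : K[X]) (n : ℕ) : gaussVal v γ F ≤ v (F.coeff n) + (n • γ : Γ) := by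
  rcases le_or_gt n F.natDegree with hn | hn
  · exact Finset.inf_le (Finset.mem_range_succ_iff.2 hn)
  · simp [coeff_eq_zero_of_natDegree_lt hn]

theorem gaussVal_ne_top {F : K[X]} (hF : F ≠ 0) : gaussVal v γ F ≠ ⊤ :=
  ne_top_of_le_ne_top
    (WithTop.add_ne_top.2 ⟨v.ne_top_iff.2 (leadingCoeff_ne_zero.2 hF), WithTop.coe_ne_top⟩)
    (gaussVal_le F F.natDegree)

theorem exists_min_gaussVal_eq (F : K[X]) :
    ∃ m, v (F.coeff m) + (m • γ : Γ) = gaussVal v γ F ∧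
      ∀ k < m, gaussVal v γ F < v (F.coeff k) + (k • γ : Γ) := by
  classical
  have h : ∃ n, v (F.coeff n) + (n • γ : Γ) = gaussVal v γ F := by
    obtain ⟨n, -, hn⟩ := Finset.exists_mem_eq_inf _ Finset.nonempty_range_add_one
      fun n => v (F.coeff n) + (n • γ : Γ)
    exact ⟨n, hn.symm⟩
  exact ⟨Nat.find h, Nat.find_spec h, fun k hk =>
    (gaussVal_le F k).lt_of_ne fun he => Nat.find_min h hk he.symm⟩

theorem map_coeff_mul_coeff_add_smul (F G : K[X]) (p q : ℕ) :
    v (F.coeff p * G.coeff q) + ((p + q) • γ : Γ) =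
      (v (F.coeff p) + (p • γ : Γ)) + (v (G.coeff q) + (q • γ : Γ)) := by
  rw [v.map_mul, add_smul, WithTop.coe_add, add_add_add_comm]

theorem le_gaussVal_mul (F G : K[X]) :
    gaussVal v γ F + gaussVal v γ G ≤ gaussVal v γ (F * G) := by
  refine Finset.le_inf fun n _ => ?_
  obtain ⟨⟨p, q⟩, hpq, hmin⟩ := (antidiagonal n).exists_min_image
    (fun x => v (F.coeff x.1 * G.coeff x.2)) ⟨(0, n), by simp⟩
  calc gaussVal v γ F + gaussVal v γ G
      ≤ (v (F.coeff p) + (p • γ : Γ)) + (v (G.coeff q) + (q • γ : Γ)) :=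
        add_le_add (gaussVal_le F p) (gaussVal_le G q)
    _ = v (F.coeff p * G.coeff q) + (n • γ : Γ) := by
        rw [← map_coeff_mul_coeff_add_smul, mem_antidiagonal.1 hpq]
    _ ≤ v ((F * G).coeff n) + (n • γ : Γ) := by
        rw [coeff_mul]
        gcongr
        exact v.map_le_sum fun x hx => hmin x hx

/-- At the smallest indices `m`, `m'` where the minima defining `gaussVal` are attained, the
coefficient of `X ^ (m + m')` in `F * G` has a single term of least value. -/
theorem gaussVal_mul_le {F G : K[X]} (hF : F ≠ 0) (hG : G ≠ 0) :
    gaussVal v γ (F * G) ≤ gaussVal v γ F + gaussVal v γ G := by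
  classical
  obtain ⟨m, hFm, hFlt⟩ := exists_min_gaussVal_eq (v := v) (γ := γ) F
  obtain ⟨m', hGm, hGlt⟩ := exists_min_gaussVal_eq (v := v) (γ := γ) G
  have hunique : ∀ x ∈ antidiagonal (m + m') \ {(m, m')},
      v (F.coeff m * G.coeff m') < v (F.coeff x.1 * G.coeff x.2) := by
    rintro ⟨p, q⟩ hx
    obtain ⟨hpq, hne⟩ : p + q = m + m' ∧ ¬(p = m ∧ q = m') := by simpa using hx
    rw [← WithTop.add_lt_add_iff_right (WithTop.coe_ne_top (a := (m + m') • γ)),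
      map_coeff_mul_coeff_add_smul, ← hpq, map_coeff_mul_coeff_add_smul, hFm, hGm]
    rcases lt_or_ge p m with hp | hp
    · exact WithTop.add_lt_add_of_lt_of_le (gaussVal_ne_top hG) (hFlt p hp) (gaussVal_le G q)
    · exact WithTop.add_lt_add_of_le_of_lt (gaussVal_ne_top hF) (gaussVal_le F p)
        (hGlt q (by omega))
  calc gaussVal v γ (F * G) ≤ v ((F * G).coeff (m + m')) + ((m + m') • γ : Γ) :=
        gaussVal_le _ _
    _ = v (F.coeff m * G.coeff m') + ((m + m') • γ : Γ) := by
        rw [coeff_mul, v.map_sum_eq_of_lt (mem_antidiagonal.2 rfl) hunique]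
    _ = gaussVal v γ F + gaussVal v γ G := by
        rw [map_coeff_mul_coeff_add_smul, hFm, hGm]

theorem gaussVal_mul (F G : K[X]) : gaussVal v γ (F * G) = gaussVal v γ F + gaussVal v γ G := by
  rcases eq_or_ne F 0 with rfl | hF
  · simp [gaussVal_zero]
  rcases eq_or_ne G 0 with rfl | hG
  · simp [gaussVal_zero]
  exact (gaussVal_mul_le hF hG).antisymm (le_gaussVal_mul F G)

theorem omegaBall_mul (a : K) (f g : K[X]) :
    omegaBall v a γ (f * g) = omegaBall v a γ f + omegaBall v a γ g := by
  simp only [omegaBall_eq_gaussVal_taylor, taylor_mul, gaussVal_mul]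

theorem omegaBall_C (a c : K) : omegaBall v a γ (C c) = v c := by
  simp [omegaBall]

theorem omegaBall_X_sub_C (a b : K) : omegaBall v a γ (X - C b) = min (v (a - b)) γ := by
  have htaylor : taylor a (X - C b) = X + C (a - b) := by
    rw [map_sub, taylor_X, taylor_C, C_sub]
    ring
  rw [omegaBall_eq_gaussVal_taylor, htaylor, gaussVal, natDegree_X_add_C]
  simp [Finset.range_add_one, min_comm]

end GaussValuation

namespace AddValuation

variable {R K Γ : Type*} [AddCommGroup Γ] [LinearOrder Γ] [IsOrderedAddMonoid Γ]

section Ring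

variable [Ring R] (v : AddValuation R (WithTop Γ))

def closedBall (a : R) (γ : Γ) : Set R :=
  {c | (γ : WithTop Γ) ≤ v (c - a)}

theorem mem_closedBall_self (a : R) (γ : Γ) : a ∈ v.closedBall a γ := by
  simp [closedBall]

theorem closedBall_subset_closedBall {a a' : R} {γ γ' : Γ} (ha' : a' ∈ v.closedBall a γ)
    (hγ : γ' ≤ γ) : v.closedBall a γ ⊆ v.closedBall a' γ' := fun c hc =>
  calc (γ' : WithTop Γ) ≤ γ := WithTop.coe_le_coe.2 hγ
    _ ≤ v ((c - a) - (a' - a)) := v.map_le_sub hc ha'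
    _ = v (c - a') := by rw [sub_sub_sub_cancel_right]

variable {I : Type*} [LinearOrder I] {a : I → R} {γ : I → Γ}

theorem center_mem_closedBall_of_le
    (hnest : ∀ i j : I, i < j → v.closedBall (a j) (γ j) ⊂ v.closedBall (a i) (γ i))
    {i j : I} (hij : i ≤ j) : a j ∈ v.closedBall (a i) (γ i) := by
  rcases hij.eq_or_lt with rfl | hlt
  · exact v.mem_closedBall_self _ _
  · exact (hnest i j hlt).subset (v.mem_closedBall_self _ _)

theorem strictMono_radius
    (hnest : ∀ i j : I, i < j → v.closedBall (a j) (γ j) ⊂ v.closedBall (a i) (γ i)) :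
    StrictMono γ := fun i j hij =>
  lt_of_not_ge fun hle => (hnest i j hij).not_superset
    (v.closedBall_subset_closedBall (v.center_mem_closedBall_of_le hnest hij.le) hle)

end Ring

section Field

variable [Field K] (v : AddValuation K (WithTop Γ))

/-- All points of a ball are at the same distance from a point outside it. -/
theorem omegaBall_X_sub_C_of_notMem {a a' b : K} {γ γ' : Γ} (hb : b ∉ v.closedBall a γ)
    (ha' : a' ∈ v.closedBall a γ) (hγ : γ ≤ γ') : omegaBall v a' γ' (X - C b) = v (b - a) := by
  have hb : v (b - a) < γ := not_le.1 hb
  have hdist : v (a' - b) = v (b - a) := by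
    have hlt : v (a - b) < v (a' - a) := by
      rw [v.map_sub_swap]
      exact hb.trans_le ha'
    rw [← sub_add_sub_cancel a' a b, v.map_add_eq_of_lt_right hlt, v.map_sub_swap]
  rw [omegaBall_X_sub_C, hdist, min_eq_left (hb.le.trans (WithTop.coe_le_coe.2 hγ))]

variable {I : Type*} [LinearOrder I] (a : I → K) (γ : I → Γ)

def stablePolynomials : Submonoid K[X] where
  carrier := {f | EventuallyConst (fun i => omegaBall v (a i) (γ i) f) atTop}
  mul_mem' hf hg := by
    change EventuallyConst _ _
    simp only [omegaBall_mul]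
    exact hf.add hg
  one_mem' := by
    change EventuallyConst _ _
    simp only [← C_1, omegaBall_C]
    exact EventuallyConst.const _

variable {a γ}

theorem C_mem_stablePolynomials (c : K) : C c ∈ v.stablePolynomials a γ := by
  change EventuallyConst _ _
  simp only [omegaBall_C]
  exact EventuallyConst.const _

theorem X_sub_C_mem_stablePolynomials
    (hnest : ∀ i j : I, i < j → v.closedBall (a j) (γ j) ⊂ v.closedBall (a i) (γ i))
    (hempty : (⋂ i : I, v.closedBall (a i) (γ i)) = ∅) (b : K) :
    X - C b ∈ v.stablePolynomials a γ := by
  obtain ⟨i₀, hi₀⟩ : ∃ i₀, b ∉ v.closedBall (a i₀) (γ i₀) := by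
    simpa using Set.eq_empty_iff_forall_notMem.1 hempty b
  have : Nonempty I := ⟨i₀⟩
  refine eventuallyConst_atTop.2 ⟨i₀, fun i hi => ?_⟩
  rw [v.omegaBall_X_sub_C_of_notMem hi₀ (v.center_mem_closedBall_of_le hnest hi)
      ((v.strictMono_radius hnest).monotone hi),
    v.omegaBall_X_sub_C_of_notMem hi₀ (v.mem_closedBall_self _ _) le_rfl]

end Field

end AddValuation

theorem stmt_17_general {K : Type*} [Field K] [IsAlgClosed K] {Γ : Type*}
    [AddCommGroup Γ] [LinearOrder Γ] [IsOrderedAddMonoid Γ]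
    (v : K → WithTop Γ)
    (hv0 : v 0 = ⊤) (hv1 : v 1 = 0)
    (hmul : ∀ x y : K, v (x * y) = v x + v y)
    (hadd : ∀ x y : K, min (v x) (v y) ≤ v (x + y))
    {I : Type*} [LinearOrder I] [Nonempty I]
    (a : I → K) (γ : I → Γ)
    (hnest : ∀ i j : I, i < j →
      {c : K | (γ j : WithTop Γ) ≤ v (c - a j)} ⊂ {c : K | (γ i : WithTop Γ) ≤ v (c - a i)})
    (hempty : (⋂ i : I, {c : K | (γ i : WithTop Γ) ≤ v (c - a i)}) = ∅) :
    ∀ f : Polynomial K, ∃ i₀ : I, ∀ i : I, i₀ ≤ i →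
      omegaBall v (a i) (γ i) f = omegaBall v (a i₀) (γ i₀) f := by
  obtain ⟨w, rfl⟩ : ∃ w : AddValuation K (WithTop Γ), ⇑w = v :=
    ⟨.of v hv0 hv1 hadd hmul, rfl⟩
  intro f
  have hlinear : ∀ p ∈ f.roots.map (fun b => X - C b), p ∈ w.stablePolynomials a γ := by
    simp only [Multiset.mem_map]
    rintro _ ⟨b, -, rfl⟩
    exact w.X_sub_C_mem_stablePolynomials hnest hempty b
  have hf : f ∈ w.stablePolynomials a γ := by
    rw [← C_leadingCoeff_mul_prod_multiset_X_sub_C (p := f) IsAlgClosed.card_roots_eq_natDegree]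
    exact mul_mem (w.C_mem_stablePolynomials _) (multiset_prod_mem _ hlinear)
  exact eventuallyConst_atTop.1 hf

/-- For a nest of closed balls `(B(aᵢ,γᵢ))_{i ∈ I}` with empty intersection in an
algebraically closed valued field, every polynomial `f ∈ K[x]` is stable: there is an
index `i₀` with `ω_{B_i}(f) = ω_{B_{i₀}}(f)` for all `i ≥ i₀`; equivalently, the set of
values `{ω_{B_i}(f) : i ∈ I}` has a maximum. -/
theorem stmt_17 {K : Type*} [Field K] [IsAlgClosed K] {Γ : Type*}
    [AddCommGroup Γ] [LinearOrder Γ] [IsOrderedAddMonoid Γ]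
    (v : K → WithTop Γ)
    (hv0 : v 0 = ⊤) (hv1 : v 1 = 0)
    (hmul : ∀ x y : K, v (x * y) = v x + v y)
    (hadd : ∀ x y : K, min (v x) (v y) ≤ v (x + y))
    (hsurj : ∀ γ : Γ, ∃ x : K, v x = (γ : WithTop Γ))
    {I : Type*} [LinearOrder I] [Nonempty I]
    (a : I → K) (γ : I → Γ)
    (hnest : ∀ i j : I, i < j →
      {c : K | (γ j : WithTop Γ) ≤ v (c - a j)} ⊂ {c : K | (γ i : WithTop Γ) ≤ v (c - a i)})
    (hempty : (⋂ i : I, {c : K | (γ i : WithTop Γ) ≤ v (c - a i)}) = ∅) :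
    ∀ f : Polynomial K, ∃ i₀ : I, ∀ i : I, i₀ ≤ i →
      omegaBall v (a i) (γ i) f = omegaBall v (a i₀) (γ i₀) f :=
  stmt_17_general v hv0 hv1 hmul hadd a γ hnest hempty
end

section
/- If f = Σ a_n (x-a)^n ∈ K[x] with the minimum min_n(v(a_n)+n·x_δ) attained only at n_0 > 0 for a cut radius δ = γ^- with γ ∈ Γ, then the stable value over the closed ball satisfies: ω_{a,γ}(f) = min{v(f(c)) : c ∈ B(a,γ)} = v(a_{n_0}) + n_0·γ, and ω_{a,γ^-}(f) = v(a_{n_0}) + n_0·x_{γ^-} strictly realizes the cut below this minimum: Γ_{< v(a_{n_0})+n_0γ} < ω_{a,γ^-}(f) < Γ_{≥ v(a_{n_0})+n_0γ} inside Γ(γ^-). -/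
/-- The order on `Γ(δ) = ℤ·x_δ ⊕ Γ` determined by a cut `δ = (L, R)` of `Γ`, so that
`L < x_δ < R` (here `x_δ = (1,0)` and `Γ ∋ γ ↦ (0,γ)`). -/
def cutLE {Γ : Type*} [AddCommGroup Γ] [LinearOrder Γ] [IsOrderedAddMonoid Γ] (L R : Set Γ) (p q : ℤ × Γ) : Prop :=
  if p.1 = q.1 then p.2 ≤ q.2
  else if q.1 < p.1 then ∃ β ∈ R, (p.1 - q.1) • β ≤ q.2 - p.2
  else ∃ β ∈ L, (p.1 - q.1) • β ≤ q.2 - p.2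

open Polynomial

theorem Multiset.sum_map_add_le_sum_map_add_card_nsmul {ι M : Type*} [AddCommMonoid M]
    [Preorder M] [IsOrderedAddMonoid M] {s t : Multiset ι} {f g : ι → M} {c : M}
    (hfg : ∀ i ∈ s, f i ≤ g i) (hfc : ∀ i ∈ t, f i ≤ c) :
    ((s + t).map f).sum ≤ (s.map g).sum + Multiset.card t • c := by
  rw [Multiset.map_add, Multiset.sum_add, ← Multiset.card_map f t]
  exact add_le_add (Multiset.sum_map_le_sum_map _ _ hfg)
    (Multiset.sum_le_card_nsmul _ _ (by simpa using hfc))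

namespace AddValuation

section CommRing

variable {R Γ₀ : Type*} [CommRing R] [LinearOrderedAddCommMonoidWithTop Γ₀] (v : AddValuation R Γ₀)

theorem map_multiset_prod (s : Multiset R) : v s.prod = (s.map v).sum := by
  induction s using Multiset.induction_on with
  | empty => simp
  | cons a s ih => rw [Multiset.prod_cons, map_mul, ih, Multiset.map_cons, Multiset.sum_cons]

theorem exists_mem_map_le_map_multiset_sum {s : Multiset R} (hs : s ≠ 0) :
    ∃ x ∈ s, v x ≤ v s.sum := by
  induction s using Multiset.induction_on with
  | empty => exact absurd rfl hs
  | cons a s ih =>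
    rw [Multiset.sum_cons]
    rcases eq_or_ne s 0 with rfl | hs'
    · exact ⟨a, Multiset.mem_cons_self a 0, by simp⟩
    obtain ⟨x, hx, hxs⟩ := ih hs'
    rcases le_total (v a) (v x) with h | h
    · exact ⟨a, Multiset.mem_cons_self a s, (le_min le_rfl (h.trans hxs)).trans (v.map_add _ _)⟩
    · exact ⟨x, Multiset.mem_cons_of_mem hx, (le_min h hxs).trans (v.map_add _ _)⟩

theorem exists_le_sum_map_le_map_esymm (s : Multiset R) {j : ℕ} (hj : j ≤ Multiset.card s) :
    ∃ T ≤ s, Multiset.card T = j ∧ (T.map v).sum ≤ v (s.esymm j) := by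
  have hne : (s.powersetCard j).map Multiset.prod ≠ 0 := by
    rw [Ne, Multiset.map_eq_zero, ← Multiset.card_eq_zero, Multiset.card_powersetCard]
    exact (Nat.choose_pos hj).ne'
  obtain ⟨x, hx, hxle⟩ := v.exists_mem_map_le_map_multiset_sum hne
  obtain ⟨T, hT, rfl⟩ := Multiset.mem_map.mp hx
  obtain ⟨hTs, hTj⟩ := Multiset.mem_powersetCard.mp hT
  exact ⟨T, hTs, hTj, v.map_multiset_prod T ▸ hxle⟩

end CommRing

section Field

variable {K Γ : Type*} [Field K] [AddCommGroup Γ] [LinearOrder Γ] [IsOrderedAddMonoid Γ]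
  (v : AddValuation K (WithTop Γ))

/-- A root `u` of `X (X - s₁) ⋯ (X - sₖ) - 1` works: the valuations of `u, u - s₁, …, u - sₖ`
sum to `0` and are all `≥ min (v u) 0`, which forces them all to be `0`. -/
theorem exists_map_eq_zero_forall_map_sub_eq_zero [IsAlgClosed K] (M : Multiset K)
    (hM : ∀ s ∈ M, 0 ≤ v s) : ∃ u, v u = 0 ∧ ∀ s ∈ M, v (u - s) = 0 := by
  set S := (0 : K) ::ₘ M
  have hS : ∀ s ∈ S, 0 ≤ v s := by
    simpa [S] using hM
  obtain ⟨u, hu⟩ : ∃ u, (S.map (u - ·)).prod = 1 := by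
    have hpos : 0 < (S.map fun s => X - C s).prod.degree := by
      rw [degree_eq_natDegree (monic_multisetProd_X_sub_C S).ne_zero,
        natDegree_multiset_prod_X_sub_C_eq_card]
      exact_mod_cast Multiset.card_pos.mpr Multiset.cons_ne_zero
    have hdeg : ((S.map fun s => X - C s).prod - 1).degree ≠ 0 := by
      rw [← C_1, degree_sub_C hpos]
      exact hpos.ne'
    obtain ⟨u, hu⟩ := IsAlgClosed.exists_root _ hdeg
    exact ⟨u, by simpa [eval_multiset_prod, sub_eq_zero] using hu⟩
  have hsum : (S.map fun s => v (u - s)).sum = 0 := by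
    rw [← Function.comp_def v, ← Multiset.map_map, ← v.map_multiset_prod, hu, v.map_one]
  have hu0 : 0 ≤ v u := by
    by_contra! hneg
    have hconst : ∀ s ∈ S, v (u - s) = v u := fun s hs =>
      v.map_sub_eq_of_lt_left (hneg.trans_le (hS s hs))
    rw [Multiset.map_congr rfl hconst, Multiset.map_const', Multiset.sum_replicate] at hsum
    exact (nsmul_neg hneg (by simp [S])).ne hsum
  have hzero := Multiset.all_zero_of_le_zero_le_of_sum_eq_zero
    (by simpa using fun s hs => (le_min hu0 (hS s hs)).trans (v.map_sub u s)) hsum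
  simp only [Multiset.mem_map] at hzero
  exact ⟨u, by simpa using hzero _ ⟨0, by simp [S], rfl⟩,
    fun s hs => hzero _ ⟨s, Multiset.mem_cons_of_mem hs, rfl⟩⟩

theorem exists_map_eq_forall_map_sub_eq_min [IsAlgClosed K] (R : Multiset K) {γ : Γ} {t₀ : K}
    (ht₀ : v t₀ = γ) : ∃ t, v t = γ ∧ ∀ r ∈ R, v (t - r) = min (γ : WithTop Γ) (v r) := by
  have ht₀0 : t₀ ≠ 0 := v.ne_top_iff.mp (ht₀ ▸ WithTop.coe_ne_top)
  obtain ⟨u, hu, hus⟩ := v.exists_map_eq_zero_forall_map_sub_eq_zero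
    ((R.filter (v · = γ)).map (· / t₀)) (by
      simp only [Multiset.mem_map, Multiset.mem_filter]
      rintro _ ⟨r, ⟨-, hr⟩, rfl⟩
      rw [v.map_div, hr, ht₀,
        LinearOrderedAddCommGroupWithTop.sub_self_eq_zero_of_ne_top WithTop.coe_ne_top])
  have hvt : v (t₀ * u) = γ := by rw [map_mul, ht₀, hu, add_zero]
  refine ⟨t₀ * u, hvt, fun r hr => ?_⟩
  rcases lt_trichotomy (v r) γ with hlt | heq | hgt
  · rw [min_eq_right hlt.le, v.map_sub_eq_of_lt_right (hvt ▸ hlt)]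
  · have hfac : t₀ * u - r = t₀ * (u - r / t₀) := by field_simp
    rw [hfac, map_mul, ht₀, heq, min_self,
      hus _ (Multiset.mem_map_of_mem _ (Multiset.mem_filter.mpr ⟨hr, heq⟩)), add_zero]
  · rw [min_eq_left hgt.le, v.map_sub_eq_of_lt_left (hvt ▸ hgt), hvt]

theorem map_eval_eq_of_card_roots {g : K[X]} (hg : Multiset.card g.roots = g.natDegree) (t : K) :
    v (g.eval t) = v g.leadingCoeff + (g.roots.map fun r => v (t - r)).sum := by
  conv_lhs => rw [← C_leadingCoeff_mul_prod_multiset_X_sub_C hg]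
  rw [eval_mul, eval_C, map_mul, eval_multiset_prod, v.map_multiset_prod, Multiset.map_map,
    Multiset.map_map]
  simp

theorem le_map_eval_of_le (g : K[X]) {γ : Γ} {t : K} (ht : (γ : WithTop Γ) ≤ v t)
    {b : WithTop Γ} (hb : ∀ n, b ≤ v (g.coeff n) + ((n • γ : Γ) : WithTop Γ)) :
    b ≤ v (g.eval t) := by
  rw [eval_eq_sum_range]
  refine v.map_le_sum fun n _ => (hb n).trans ?_
  rw [map_mul, map_pow, WithTop.coe_nsmul]
  gcongr

/-- Any `t` with `v (t - r) = min γ (v r)` for all roots `r` of `g` works: by Vieta, `g.coeff n`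
is `± g.leadingCoeff` times a sum of products of `deg g - n` roots. -/
theorem exists_map_eq_forall_map_eval_le [IsAlgClosed K] (g : K[X]) {γ : Γ} {t₀ : K}
    (ht₀ : v t₀ = γ) :
    ∃ t, v t = γ ∧ ∀ n, v (g.eval t) ≤ v (g.coeff n) + ((n • γ : Γ) : WithTop Γ) := by
  have hroots : Multiset.card g.roots = g.natDegree :=
    splits_iff_card_roots.mp (IsAlgClosed.splits g)
  obtain ⟨t, hvt, hgen⟩ := v.exists_map_eq_forall_map_sub_eq_min g.roots ht₀
  refine ⟨t, hvt, fun n => ?_⟩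
  rcases lt_or_ge g.natDegree n with hn | hn
  · simp [coeff_eq_zero_of_natDegree_lt hn]
  obtain ⟨T, hTR, hTcard, hT⟩ :=
    v.exists_le_sum_map_le_map_esymm g.roots (j := g.natDegree - n) (by omega)
  obtain ⟨U, hTU⟩ := Multiset.le_iff_exists_add.mp hTR
  have hcard : Multiset.card U = n := by
    have := congrArg Multiset.card hTU
    rw [Multiset.card_add, hTcard, hroots] at this
    omega
  calc v (g.eval t) = v g.leadingCoeff + (g.roots.map fun r => v (t - r)).sum :=
        v.map_eval_eq_of_card_roots hroots t
    _ ≤ v g.leadingCoeff + ((T.map v).sum + n • (γ : WithTop Γ)) := by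
        gcongr
        rw [← hcard, hTU]
        refine Multiset.sum_map_add_le_sum_map_add_card_nsmul
          (fun r hr => (hgen r ?_).trans_le (min_le_right _ _))
          (fun r hr => (hgen r ?_).trans_le (min_le_left _ _)) <;> simp [hTU, hr]
    _ ≤ v g.leadingCoeff + v (g.roots.esymm (g.natDegree - n)) + n • (γ : WithTop Γ) := by
        rw [add_assoc]; gcongr
    _ = v (g.coeff n) + ((n • γ : Γ) : WithTop Γ) := by
        rw [coeff_eq_esymm_roots_of_card hroots hn, map_mul, map_mul, map_pow, map_neg, map_one,
          nsmul_zero, add_zero, WithTop.coe_nsmul]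

end Field

end AddValuation

section Cut

variable {Γ : Type*} [AddCommGroup Γ] [LinearOrder Γ] [IsOrderedAddMonoid Γ]

/-- Sending `x_{γ^-}` to `γ` is monotone for the order of `Γ(γ^-)`. -/
theorem add_zsmul_le_add_zsmul_of_cutLE_Iio_Ici {γ x y : Γ} {n m : ℤ}
    (h : cutLE (Set.Iio γ) (Set.Ici γ) (n, x) (m, y)) : x + n • γ ≤ y + m • γ := by
  suffices hsmul : (n - m) • γ ≤ y - x by
    rwa [sub_zsmul, ← sub_eq_add_neg, sub_le_sub_iff, add_comm] at hsmul
  unfold cutLE at h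
  split_ifs at h with hnm hmn
  · rw [show n = m from hnm, sub_self, zero_zsmul, sub_nonneg]
    exact h
  · obtain ⟨β, hβ, hle⟩ := h
    exact (zsmul_le_zsmul_right (sub_nonneg.2 hmn.le) hβ).trans hle
  · obtain ⟨β, hβ, hle⟩ := h
    refine le_trans ?_ hle
    rw [← neg_sub m n, neg_zsmul, neg_zsmul, neg_le_neg_iff]
    exact zsmul_le_zsmul_right (by omega) (le_of_lt hβ)

theorem cutLE_Iio_Ici_of_lt_add_zsmul {γ x α β : Γ} {n : ℤ} (hn : 0 < n) (hβ : n • β = α - x)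
    (hα : α < x + n • γ) : cutLE (Set.Iio γ) (Set.Ici γ) (0, α) (n, x) := by
  unfold cutLE
  rw [if_neg hn.ne, if_neg hn.not_gt]
  refine ⟨β, lt_of_not_ge fun hγβ => hα.not_ge ?_, by rw [zero_sub, neg_zsmul, hβ, neg_sub]⟩
  rw [← le_sub_iff_add_le', ← hβ]
  exact zsmul_le_zsmul_right hn.le hγβ

theorem cutLE_Iio_Ici_of_add_zsmul_le {γ x α : Γ} {n : ℤ} (hn : 0 < n) (hα : x + n • γ ≤ α) :
    cutLE (Set.Iio γ) (Set.Ici γ) (n, x) (0, α) := by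
  unfold cutLE
  rw [if_neg hn.ne', if_pos hn, sub_zero]
  exact ⟨γ, le_rfl, le_sub_iff_add_le'.2 hα⟩

end Cut

theorem omegaBall_eq_of_forall_le {K Γ : Type*} [Field K] [AddCommGroup Γ] [LinearOrder Γ]
    [IsOrderedAddMonoid Γ] {v : K → WithTop Γ} {a : K} {γ : Γ} {f : K[X]} {b : WithTop Γ}
    {n : ℕ} (hle : ∀ m, b ≤ v ((f.comp (X + C a)).coeff m) + ((m • γ : Γ) : WithTop Γ))
    (hn : n ≤ f.natDegree) (hb : v ((f.comp (X + C a)).coeff n) + ((n • γ : Γ) : WithTop Γ) = b) :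
    omegaBall v a γ f = b :=
  le_antisymm (hb ▸ Finset.inf_le (Finset.mem_range_succ_iff.2 hn))
    (Finset.le_inf fun m _ => hle m)

theorem stmt_18_general {K : Type*} [Field K] [IsAlgClosed K] {Γ : Type*}
    [AddCommGroup Γ] [LinearOrder Γ] [IsOrderedAddMonoid Γ]
    (v : K → WithTop Γ)
    (hv0 : v 0 = ⊤) (hv1 : v 1 = 0)
    (hmul : ∀ x y : K, v (x * y) = v x + v y)
    (hadd : ∀ x y : K, min (v x) (v y) ≤ v (x + y))
    (hsurj : ∀ γ' : Γ, ∃ x : K, v x = (γ' : WithTop Γ))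
    (hdvd : ∀ n : ℤ, n ≠ 0 → ∀ γ' : Γ, ∃ α : Γ, n • α = γ')
    (a : K) (γ : Γ) (f : Polynomial K)
    (n₀ : ℕ) (hn₀ : 0 < n₀) (γ₀ : Γ)
    (hcoeff : v ((f.comp (Polynomial.X + Polynomial.C a)).coeff n₀) = (γ₀ : WithTop Γ))
    (hminuniq : ∀ m : ℕ, m ≠ n₀ → ∀ γm : Γ,
      v ((f.comp (Polynomial.X + Polynomial.C a)).coeff m) = (γm : WithTop Γ) →
      cutLE (Set.Iio γ) (Set.Ici γ) ((n₀ : ℤ), γ₀) ((m : ℤ), γm) ∧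
      ¬ cutLE (Set.Iio γ) (Set.Ici γ) ((m : ℤ), γm) ((n₀ : ℤ), γ₀)) :
    omegaBall v a γ f = ((γ₀ + n₀ • γ : Γ) : WithTop Γ) ∧
    (∀ c : K, (γ : WithTop Γ) ≤ v (c - a) →
      ((γ₀ + n₀ • γ : Γ) : WithTop Γ) ≤ v (f.eval c)) ∧
    (∃ c : K, (γ : WithTop Γ) ≤ v (c - a) ∧
      v (f.eval c) = ((γ₀ + n₀ • γ : Γ) : WithTop Γ)) ∧
    (∀ α : Γ, α < γ₀ + n₀ • γ →
      cutLE (Set.Iio γ) (Set.Ici γ) ((0 : ℤ), α) ((n₀ : ℤ), γ₀) ∧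
      ((0 : ℤ), α) ≠ (((n₀ : ℤ), γ₀) : ℤ × Γ)) ∧
    (∀ α : Γ, γ₀ + n₀ • γ ≤ α →
      cutLE (Set.Iio γ) (Set.Ici γ) ((n₀ : ℤ), γ₀) ((0 : ℤ), α) ∧
      ((0 : ℤ), α) ≠ (((n₀ : ℤ), γ₀) : ℤ × Γ)) := by
  set w := AddValuation.of v hv0 hv1 hadd hmul
  set g := f.comp (X + C a) with hg
  have hevalf : ∀ c, f.eval c = g.eval (c - a) := fun c => by
    rw [hg, ← taylor_apply, taylor_eval, sub_add_cancel]
  have hmin : ∀ m : ℕ,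
      ((γ₀ + n₀ • γ : Γ) : WithTop Γ) ≤ v (g.coeff m) + ((m • γ : Γ) : WithTop Γ) := by
    intro m
    rcases eq_or_ne m n₀ with rfl | hm
    · rw [hcoeff, WithTop.coe_add]
    cases hvm : v (g.coeff m) with
    | top => simp
    | coe γm =>
      have h := add_zsmul_le_add_zsmul_of_cutLE_Iio_Ici (hminuniq m hm γm hvm).1
      rw [natCast_zsmul, natCast_zsmul] at h
      exact_mod_cast h
  have hn₀deg : n₀ ≤ f.natDegree := by
    rw [← natDegree_taylor f a, taylor_apply]
    refine le_natDegree_of_ne_zero (w.ne_top_iff.mp ?_)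
    exact hcoeff.trans_ne WithTop.coe_ne_top
  have hlower : ∀ c : K, (γ : WithTop Γ) ≤ v (c - a) →
      ((γ₀ + n₀ • γ : Γ) : WithTop Γ) ≤ v (f.eval c) := fun c hc =>
    hevalf c ▸ w.le_map_eval_of_le g hc hmin
  obtain ⟨t₀, ht₀⟩ := hsurj γ
  obtain ⟨t, hvt, hgeneric⟩ := w.exists_map_eq_forall_map_eval_le g ht₀
  have hball : (γ : WithTop Γ) ≤ v (a + t - a) := by
    rw [add_sub_cancel_left]
    exact hvt.ge
  have hn₀ℤ : (0 : ℤ) < n₀ := by exact_mod_cast hn₀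
  have hne : ∀ α : Γ, ((0 : ℤ), α) ≠ (((n₀ : ℤ), γ₀) : ℤ × Γ) := fun α h =>
    hn₀ℤ.ne (congrArg Prod.fst h)
  refine ⟨omegaBall_eq_of_forall_le hmin hn₀deg (by rw [hcoeff, WithTop.coe_add]), hlower,
    ⟨a + t, hball, le_antisymm ?_ (hlower _ hball)⟩,
    fun α hα => ⟨?_, hne α⟩, fun α hα => ⟨?_, hne α⟩⟩
  · rw [hevalf, add_sub_cancel_left, WithTop.coe_add, ← hcoeff]
    exact hgeneric n₀
  · obtain ⟨β, hβ⟩ := hdvd n₀ hn₀ℤ.ne' (α - γ₀)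
    exact cutLE_Iio_Ici_of_lt_add_zsmul hn₀ℤ hβ (by rwa [natCast_zsmul])
  · exact cutLE_Iio_Ici_of_add_zsmul_le hn₀ℤ (by rwa [natCast_zsmul])

/-- If for `f = Σ aₙ(x-a)ⁿ` the minimum `minₙ (v(aₙ) + n·x_δ)` for the cut radius
`δ = γ^- = (Γ_{<γ}, Γ_{≥γ})` is attained only at `n₀ > 0`, then the stable value over the
closed ball satisfies `ω_{a,γ}(f) = min {v(f(c)) : c ∈ B(a,γ)} = v(a_{n₀}) + n₀·γ`, and
`ω_{a,γ^-}(f) = v(a_{n₀}) + n₀·x_{γ^-}` strictly realizes the cut below this minimum: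
`Γ_{< v(a_{n₀})+n₀γ} < ω_{a,γ^-}(f) < Γ_{≥ v(a_{n₀})+n₀γ}` inside `Γ(γ^-)`. -/
theorem stmt_18 {K : Type*} [Field K] [IsAlgClosed K] {Γ : Type*}
    [AddCommGroup Γ] [LinearOrder Γ] [IsOrderedAddMonoid Γ]
    (v : K → WithTop Γ)
    (hv0 : v 0 = ⊤) (hv1 : v 1 = 0)
    (hmul : ∀ x y : K, v (x * y) = v x + v y)
    (hadd : ∀ x y : K, min (v x) (v y) ≤ v (x + y))
    (hsurj : ∀ γ' : Γ, ∃ x : K, v x = (γ' : WithTop Γ))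
    (hdvd : ∀ n : ℤ, n ≠ 0 → ∀ γ' : Γ, ∃ α : Γ, n • α = γ')
    (a : K) (γ : Γ) (f : Polynomial K) (hf : f ≠ 0)
    (n₀ : ℕ) (hn₀ : 0 < n₀) (γ₀ : Γ)
    (hcoeff : v ((f.comp (Polynomial.X + Polynomial.C a)).coeff n₀) = (γ₀ : WithTop Γ))
    (hminuniq : ∀ m : ℕ, m ≠ n₀ → ∀ γm : Γ,
      v ((f.comp (Polynomial.X + Polynomial.C a)).coeff m) = (γm : WithTop Γ) →
      cutLE (Set.Iio γ) (Set.Ici γ) ((n₀ : ℤ), γ₀) ((m : ℤ), γm) ∧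
      ¬ cutLE (Set.Iio γ) (Set.Ici γ) ((m : ℤ), γm) ((n₀ : ℤ), γ₀)) :
    omegaBall v a γ f = ((γ₀ + n₀ • γ : Γ) : WithTop Γ) ∧
    (∀ c : K, (γ : WithTop Γ) ≤ v (c - a) →
      ((γ₀ + n₀ • γ : Γ) : WithTop Γ) ≤ v (f.eval c)) ∧
    (∃ c : K, (γ : WithTop Γ) ≤ v (c - a) ∧
      v (f.eval c) = ((γ₀ + n₀ • γ : Γ) : WithTop Γ)) ∧
    (∀ α : Γ, α < γ₀ + n₀ • γ →
      cutLE (Set.Iio γ) (Set.Ici γ) ((0 : ℤ), α) ((n₀ : ℤ), γ₀) ∧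
      ((0 : ℤ), α) ≠ (((n₀ : ℤ), γ₀) : ℤ × Γ)) ∧
    (∀ α : Γ, γ₀ + n₀ • γ ≤ α →
      cutLE (Set.Iio γ) (Set.Ici γ) ((n₀ : ℤ), γ₀) ((0 : ℤ), α) ∧
      ((0 : ℤ), α) ≠ (((n₀ : ℤ), γ₀) : ℤ × Γ)) :=
  stmt_18_general v hv0 hv1 hmul hadd hsurj hdvd a γ f n₀ hn₀ γ₀ hcoeff hminuniq
end
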